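/- Generalized performance difference decomposition: for any policies π, π̂, μ on a discounted MDP with discount γ ∈ (0,1), and any functions U, f : S × A → ℝ, (1-γ)(J_U(π) - J_U(π̂)) = E_μ[(f - T_U^{π̂} f)(s,a)] + E_π[(T_U^{π̂} f - f)(s,a)] + E_π[f(s, π) - f(s, π̂)] + A_μ(π̂, f) - A_μ(π̂, Q_U^{π̂}), where E_π denotes expectation over d^π, A_μ(π̂, f) = E_μ[f(s, π̂) - f(s,a)], and Q_U^{π̂} is the Q-value function of π̂ for U. -/

import Mathlib

open Finset

/-- Distribution over state-action pairs at time `t` when running policy `pol`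
from initial state `s0` in the MDP with transition kernel `P`. -/
noncomputable def stepDist {S A : Type*} [Fintype S] [Fintype A] [DecidableEq S]
    (P : S → A → S → ℝ) (pol : S → A → ℝ) (s0 : S) : ℕ → S → A → ℝ
  | 0 => fun s a => (if s = s0 then (1 : ℝ) else 0) * pol s a
  | (t + 1) => fun s a => (∑ s', ∑ a', stepDist P pol s0 t s' a' * P s' a' s) * pol s a

/-- Discounted occupancy measure d^π(s,a) = (1-γ) Σ_t γ^t P^π(s_t=s, a_t=a). -/
noncomputable def occ {S A : Type*} [Fintype S] [Fintype A] [DecidableEq S]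
    (γ : ℝ) (P : S → A → S → ℝ) (pol : S → A → ℝ) (s0 : S) (s : S) (a : A) : ℝ :=
  (1 - γ) * ∑' t : ℕ, γ ^ t * stepDist P pol s0 t s a

/-- Expectation of `h` under the discounted occupancy measure d^π. -/
noncomputable def Eocc {S A : Type*} [Fintype S] [Fintype A] [DecidableEq S]
    (γ : ℝ) (P : S → A → S → ℝ) (pol : S → A → ℝ) (s0 : S) (h : S → A → ℝ) : ℝ :=
  ∑ s, ∑ a, occ γ P pol s0 s a * h s a

/-- f(s, π) = Σ_a π(a|s) f(s,a). -/
def fPol {S A : Type*} [Fintype A] (f : S → A → ℝ) (pol : S → A → ℝ) (s : S) : ℝ :=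
  ∑ a, pol s a * f s a

/-- Bellman operator (T_U^π f)(s,a) = U(s,a) + γ E_{s'~P(·|s,a)}[f(s',π)]. -/
noncomputable def bellman {S A : Type*} [Fintype S] [Fintype A]
    (γ : ℝ) (P : S → A → S → ℝ) (U : S → A → ℝ) (pol : S → A → ℝ) (f : S → A → ℝ)
    (s : S) (a : A) : ℝ :=
  U s a + γ * ∑ s', P s a s' * fPol f pol s'

/-- J_U(π) = (1/(1-γ)) E_{d^π}[U]. -/
noncomputable def Jval {S A : Type*} [Fintype S] [Fintype A] [DecidableEq S]
    (γ : ℝ) (P : S → A → S → ℝ) (pol : S → A → ℝ) (s0 : S) (U : S → A → ℝ) : ℝ :=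
  (1 / (1 - γ)) * Eocc γ P pol s0 U

/-- `P` is a transition kernel (each row a probability distribution). -/
def IsKernel {S A : Type*} [Fintype S] (P : S → A → S → ℝ) : Prop :=
  ∀ s a, (∀ s', 0 ≤ P s a s') ∧ ∑ s', P s a s' = 1

/-- `pol` is a (Markov stationary) policy. -/
def IsPolicy {S A : Type*} [Fintype A] (pol : S → A → ℝ) : Prop :=
  ∀ s, (∀ a, 0 ≤ pol s a) ∧ ∑ a, pol s a = 1

/-!
By the Bellman flow equation `d^ρ(s') = (1-γ)[s' = s₀] + γ Σ_{s,a} d^ρ(s,a) P(s'|s,a)` for the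
occupancy measure of a policy `ρ`, one has `E_ρ[v(s) - γ E_{s'∼P(·|s,a)} v(s')] = (1-γ) v(s₀)`;
with `v = f(·, π̂)` this reads `E_ρ[f(s,π̂) - T_U^{π̂} f] = (1-γ) f(s₀,π̂) - E_ρ[U]`.
Apply this for `ρ = μ, π` to `f` and for `ρ = μ, π̂` to the fixed point `Q = T_U^{π̂} Q`.
Together with `E_ρ[h(s,ρ) - h] = 0` (for `ρ = π, h = f` and `ρ = π̂, h = Q`), all terms
except `E_π[U] - E_π̂[U]` cancel.
-/

section Occupancy

variable {S A : Type*} [Fintype S] [Fintype A] [DecidableEq S]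
  {γ : ℝ} {P : S → A → S → ℝ} {ρ : S → A → ℝ} {s0 : S}

noncomputable def stateDist (P : S → A → S → ℝ) (ρ : S → A → ℝ) (s0 : S) : ℕ → S → ℝ
  | 0 => fun s => if s = s0 then 1 else 0
  | t + 1 => fun s => ∑ s', ∑ a', stepDist P ρ s0 t s' a' * P s' a' s

noncomputable def stateOcc (γ : ℝ) (P : S → A → S → ℝ) (ρ : S → A → ℝ) (s0 : S) (s : S) : ℝ :=
  (1 - γ) * ∑' t : ℕ, γ ^ t * stateDist P ρ s0 t s

theorem stepDist_eq_stateDist_mul (t : ℕ) (s : S) (a : A) :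
    stepDist P ρ s0 t s a = stateDist P ρ s0 t s * ρ s a := by
  cases t <;> rfl

theorem stateDist_nonneg (hP : IsKernel P) (hρ : IsPolicy ρ) (t : ℕ) (s : S) :
    0 ≤ stateDist P ρ s0 t s := by
  induction t generalizing s with
  | zero => simp only [stateDist]; positivity
  | succ t ih =>
    refine sum_nonneg fun s' _ => sum_nonneg fun a' _ => ?_
    rw [stepDist_eq_stateDist_mul]
    exact mul_nonneg (mul_nonneg (ih s') ((hρ s').1 a')) ((hP s' a').1 s)

theorem sum_stateDist (hP : IsKernel P) (hρ : IsPolicy ρ) (t : ℕ) :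
    ∑ s, stateDist P ρ s0 t s = 1 := by
  induction t with
  | zero => simp [stateDist]
  | succ t ih =>
    calc ∑ s, stateDist P ρ s0 (t + 1) s
        = ∑ s', ∑ a', stepDist P ρ s0 t s' a' * ∑ s, P s' a' s := by
          simp only [stateDist, mul_sum]
          rw [sum_comm]
          exact sum_congr rfl fun _ _ => sum_comm
      _ = ∑ s', stateDist P ρ s0 t s' * ∑ a', ρ s' a' := by
          simp only [(hP _ _).2, stepDist_eq_stateDist_mul, mul_one, mul_sum]
      _ = 1 := by simp only [(hρ _).2, mul_one, ih]

theorem summable_geometric_mul_stateDist (hγ : |γ| < 1) (hP : IsKernel P) (hρ : IsPolicy ρ)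
    (s : S) : Summable fun t : ℕ => γ ^ t * stateDist P ρ s0 t s := by
  refine Summable.of_norm_bounded (summable_geometric_of_abs_lt_one hγ).abs fun t => ?_
  have hle : stateDist P ρ s0 t s ≤ 1 := by
    rw [← sum_stateDist (s0 := s0) hP hρ t]
    exact single_le_sum (fun s' _ => stateDist_nonneg hP hρ t s') (mem_univ s)
  rw [Real.norm_eq_abs, abs_mul, abs_of_nonneg (stateDist_nonneg hP hρ t s)]
  exact mul_le_of_le_one_right (abs_nonneg _) hle

theorem occ_eq_stateOcc_mul (s : S) (a : A) :
    occ γ P ρ s0 s a = stateOcc γ P ρ s0 s * ρ s a := by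
  simp only [occ, stateOcc, stepDist_eq_stateDist_mul, ← mul_assoc, tsum_mul_right]

theorem Eocc_eq_sum_stateOcc_mul_fPol (h : S → A → ℝ) :
    Eocc γ P ρ s0 h = ∑ s, stateOcc γ P ρ s0 s * fPol h ρ s := by
  simp only [Eocc, fPol, occ_eq_stateOcc_mul, mul_sum, mul_assoc]

theorem Eocc_sub (h k : S → A → ℝ) :
    Eocc γ P ρ s0 (fun s a => h s a - k s a) = Eocc γ P ρ s0 h - Eocc γ P ρ s0 k := by
  simp only [Eocc, mul_sub, sum_sub_distrib]

theorem Eocc_fPol_sub_self (hρ : IsPolicy ρ) (h : S → A → ℝ) :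
    Eocc γ P ρ s0 (fun s a => fPol h ρ s - h s a) = 0 := by
  have hρh : ∀ s, fPol (fun s a => fPol h ρ s - h s a) ρ s = 0 := fun s => by
    simp only [fPol, mul_sub, sum_sub_distrib, ← sum_mul, (hρ s).2, one_mul, sub_self]
  simp only [Eocc_eq_sum_stateOcc_mul_fPol, hρh, mul_zero, sum_const_zero]

theorem stateOcc_bellman_flow (hγ : |γ| < 1) (hP : IsKernel P) (hρ : IsPolicy ρ) (s : S) :
    stateOcc γ P ρ s0 s
      = (1 - γ) * (if s = s0 then 1 else 0) + γ * ∑ s', ∑ a', occ γ P ρ s0 s' a' * P s' a' s := by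
  have hshift : ∑' t : ℕ, γ ^ (t + 1) * stateDist P ρ s0 (t + 1) s
      = γ * ∑ s', ∑ a', (∑' t : ℕ, γ ^ t * stepDist P ρ s0 t s' a') * P s' a' s := by
    have hsum : ∀ s' a', Summable fun t : ℕ => γ ^ t * stepDist P ρ s0 t s' a' * P s' a' s :=
      fun s' a' => by
        simpa only [stepDist_eq_stateDist_mul, mul_assoc] using
          (summable_geometric_mul_stateDist (s0 := s0) hγ hP hρ s').mul_right (ρ s' a' * P s' a' s)
    calc ∑' t : ℕ, γ ^ (t + 1) * stateDist P ρ s0 (t + 1) s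
        = ∑' t : ℕ, γ * ∑ s', ∑ a', γ ^ t * stepDist P ρ s0 t s' a' * P s' a' s := by
          simp only [stateDist, pow_succ, mul_sum, mul_assoc, mul_left_comm]
      _ = γ * ∑ s', ∑ a', ∑' t : ℕ, γ ^ t * stepDist P ρ s0 t s' a' * P s' a' s := by
          rw [tsum_mul_left, Summable.tsum_finsetSum fun s' _ => summable_sum fun a' _ => hsum s' a']
          simp only [Summable.tsum_finsetSum fun a' _ => hsum _ a']
      _ = _ := by simp only [tsum_mul_right]
  rw [stateOcc, (summable_geometric_mul_stateDist hγ hP hρ s).tsum_eq_zero_add, hshift]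
  simp only [occ, stateDist, mul_assoc, ← mul_sum]
  ring

theorem Eocc_bellman_flow (hγ : |γ| < 1) (hP : IsKernel P) (hρ : IsPolicy ρ) (v : S → ℝ) :
    Eocc γ P ρ s0 (fun s _ => v s) - γ * Eocc γ P ρ s0 (fun s a => ∑ s', P s a s' * v s')
      = (1 - γ) * v s0 := by
  have hstate : Eocc γ P ρ s0 (fun s _ => v s) = ∑ s, stateOcc γ P ρ s0 s * v s := by
    simp only [Eocc_eq_sum_stateOcc_mul_fPol, fPol, ← sum_mul, (hρ _).2, one_mul]
  have hnext : γ * Eocc γ P ρ s0 (fun s a => ∑ s', P s a s' * v s')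
      = ∑ s', (γ * ∑ s, ∑ a, occ γ P ρ s0 s a * P s a s') * v s' := by
    simp only [Eocc, mul_sum, sum_mul]
    conv_rhs => rw [sum_comm]
    refine sum_congr rfl fun s _ => ?_
    rw [sum_comm]
    exact sum_congr rfl fun _ _ => sum_congr rfl fun _ _ => by ring
  have hflow : ∀ s', γ * ∑ s, ∑ a, occ γ P ρ s0 s a * P s a s'
      = stateOcc γ P ρ s0 s' - (1 - γ) * (if s' = s0 then 1 else 0) := fun s' => by
    rw [stateOcc_bellman_flow hγ hP hρ]; ring
  simp only [hstate, hnext, hflow, sub_mul, sum_sub_distrib, mul_assoc, ite_mul, one_mul,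
    zero_mul, ← mul_sum, sum_ite_eq', mem_univ, if_true]
  ring

theorem Eocc_fPol_sub_bellman (hγ : |γ| < 1) (hP : IsKernel P) (hρ : IsPolicy ρ)
    (U σ f : S → A → ℝ) :
    Eocc γ P ρ s0 (fun s a => fPol f σ s - bellman γ P U σ f s a)
      = (1 - γ) * fPol f σ s0 - Eocc γ P ρ s0 U := by
  rw [← Eocc_bellman_flow (s0 := s0) hγ hP hρ]
  simp only [Eocc, bellman, mul_sub, mul_add, sum_sub_distrib, sum_add_distrib, mul_sum,
    mul_left_comm]
  ring

end Occupancy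

/-- performance difference decomposition (Lemma 12 of Cheng et al.). -/
theorem stmt7 {S A : Type*} [Fintype S] [Fintype A] [DecidableEq S]
    (γ : ℝ) (hγ0 : 0 < γ) (hγ1 : γ < 1)
    (P : S → A → S → ℝ) (hP : IsKernel P)
    (pol polhat polmu : S → A → ℝ)
    (hpol : IsPolicy pol) (hpolhat : IsPolicy polhat) (hpolmu : IsPolicy polmu)
    (s0 : S) (U f Q : S → A → ℝ)
    (hQ : ∀ s a, Q s a = bellman γ P U polhat Q s a) :
    (1 - γ) * (Jval γ P pol s0 U - Jval γ P polhat s0 U)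
      = Eocc γ P polmu s0 (fun s a => f s a - bellman γ P U polhat f s a)
        + Eocc γ P pol s0 (fun s a => bellman γ P U polhat f s a - f s a)
        + Eocc γ P pol s0 (fun s a => fPol f pol s - fPol f polhat s)
        + Eocc γ P polmu s0 (fun s a => fPol f polhat s - f s a)
        - Eocc γ P polmu s0 (fun s a => fPol Q polhat s - Q s a) := by
  have hγ : |γ| < 1 := abs_lt.2 ⟨by linarith, hγ1⟩
  have hJ : (1 - γ) * (Jval γ P pol s0 U - Jval γ P polhat s0 U)
      = Eocc γ P pol s0 U - Eocc γ P polhat s0 U := by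
    rw [Jval, Jval, ← mul_sub, ← mul_assoc, mul_one_div_cancel (by linarith), one_mul]
  have hQfix : bellman γ P U polhat Q = Q := funext₂ fun s a => (hQ s a).symm
  have hμf := Eocc_fPol_sub_bellman (s0 := s0) hγ hP hpolmu U polhat f
  have hπf := Eocc_fPol_sub_bellman (s0 := s0) hγ hP hpol U polhat f
  have hμQ := Eocc_fPol_sub_bellman (s0 := s0) hγ hP hpolmu U polhat Q
  have hπhatQ := Eocc_fPol_sub_bellman (s0 := s0) hγ hP hpolhat U polhat Q
  have hπ_self := Eocc_fPol_sub_self (γ := γ) (P := P) (s0 := s0) hpol f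
  have hπhat_self := Eocc_fPol_sub_self (γ := γ) (P := P) (s0 := s0) hpolhat Q
  simp only [Eocc_sub, hQfix] at hμf hπf hμQ hπhatQ hπ_self hπhat_self ⊢
  rw [hJ]
  linarith
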